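/- Let 0 < γ < 1, n < 1 and ν ≥ 1/2 − n. Then for all x > 0, ∫_x^∞ e^{γt} K_{ν+n}(t)/t^ν dt < (e^{γx}/(1−γ)) · ∫_x^∞ K_{ν+n}(t)/t^ν dt. -/

import Mathlib

/-!
Write `μ = ν + n` and `g t = K_μ(t) / t^ν`. The function
`H s = e^{γ s} ∫_s^∞ g - (1 - γ) ∫_s^∞ e^{γ t} g(t) dt` tends to `0` at infinity and has derivative
`γ e^{γ s} (∫_s^∞ g - g s)`, so `H x > 0` as soon as `∫_s^∞ g < g s` for all `s > 0`.
For the latter, `μ - 1 < ν` gives `t^{-ν} < s^{μ-1-ν} t^{-(μ-1)}` on `(s, ∞)`; the identity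
`(t^{-λ} K_λ(t))' = -t^{-λ} K_{λ+1}(t)` evaluates
`∫_s^∞ t^{-(μ-1)} K_μ(t) dt = s^{-(μ-1)} K_{μ-1}(s)`; and `K_{μ-1}(s) ≤ K_μ(s)` because
`|μ - 1| ≤ |μ|` when `μ ≥ 1/2`.
-/

open MeasureTheory Set Real

/-- Modified Bessel function of the second kind:
`K_ν(x) = ∫_0^∞ exp(−x cosh t) cosh(ν t) dt`. -/
noncomputable def besselK (ν x : ℝ) : ℝ :=
  ∫ t in Ioi (0 : ℝ), Real.exp (-(x * Real.cosh t)) * Real.cosh (ν * t)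

open Filter Topology Asymptotics

lemma cosh_le_exp_abs (y : ℝ) : cosh y ≤ exp |y| := by
  rw [← cosh_abs, cosh_eq]
  linarith [exp_le_exp.2 (neg_le_self (abs_nonneg y))]

lemma abs_sinh_le_exp_abs (y : ℝ) : |sinh y| ≤ exp |y| := by
  rw [abs_sinh]
  exact (sinh_lt_cosh _).le.trans (by simpa using cosh_le_exp_abs |y|)

lemma sq_div_four_le_cosh {t : ℝ} (ht : 0 ≤ t) : t ^ 2 / 4 ≤ cosh t := by
  rw [cosh_eq]
  nlinarith [quadratic_le_exp_of_nonneg ht, exp_pos (-t)]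

lemma integrable_exp_mul_sub_mul_sq {b : ℝ} (hb : 0 < b) (c : ℝ) :
    Integrable fun t : ℝ => exp (c * t - b * t ^ 2) := by
  refine (((integrable_exp_neg_mul_sq hb).comp_sub_right (c / (2 * b))).const_mul
    (exp (c ^ 2 / (4 * b)))).congr (.of_forall fun t => ?_)
  simp only [← exp_add]
  congr 1
  field_simp
  ring

lemma integrableOn_exp_mul_sub_mul_cosh {x : ℝ} (hx : 0 < x) (c : ℝ) :
    IntegrableOn (fun t => exp (c * t - x * cosh t)) (Ioi 0) :=
  (integrable_exp_mul_sub_mul_sq (b := x / 4) (by positivity) c).integrableOn.mono'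
    (by fun_prop : Continuous _).aestronglyMeasurable <|
    (ae_restrict_mem measurableSet_Ioi).mono fun t (ht : 0 < t) => by
      rw [norm_of_nonneg (exp_pos _).le, exp_le_exp]
      nlinarith [sq_div_four_le_cosh ht.le]

lemma integrableOn_Ioi_of_abs_le_exp_mul_sub_mul_cosh {f : ℝ → ℝ} (hf : Continuous f) {x : ℝ}
    (hx : 0 < x) (c : ℝ) (hbound : ∀ t, 0 < t → |f t| ≤ exp (c * t - x * cosh t)) :
    IntegrableOn f (Ioi 0) :=
  (integrableOn_exp_mul_sub_mul_cosh hx c).mono' hf.aestronglyMeasurable <|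
    (ae_restrict_mem measurableSet_Ioi).mono hbound

lemma abs_exp_neg_mul_cosh_mul_le {x t u c : ℝ} (hu : |u| ≤ exp (c * t)) :
    |exp (-(x * cosh t)) * u| ≤ exp (c * t - x * cosh t) := by
  rw [abs_mul, abs_exp, sub_eq_neg_add, exp_add]
  exact mul_le_mul_of_nonneg_left hu (exp_pos _).le

lemma setIntegral_lt_setIntegral_of_forall_lt {X : Type*} [MeasurableSpace X] {μ : Measure X}
    {f g : X → ℝ} {s : Set X} (hs : MeasurableSet s) (hμs : μ s ≠ 0) (hf : IntegrableOn f s μ)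
    (hg : IntegrableOn g s μ) (hlt : ∀ x ∈ s, f x < g x) :
    ∫ x in s, f x ∂μ < ∫ x in s, g x ∂μ := by
  have hpos : ∀ x ∈ s, 0 < (g - f) x := fun x hx => sub_pos.2 (hlt x hx)
  rw [← sub_pos, ← integral_sub hg hf, ← Pi.sub_def,
    setIntegral_pos_iff_support_of_nonneg_ae _ (hg.sub hf),
    inter_eq_right.2 fun x hx => Function.mem_support.2 (hpos x hx).ne', pos_iff_ne_zero]
  · exact hμs
  · filter_upwards [ae_restrict_mem hs] with x hx using (hpos x hx).le

lemma abs_cosh_mul_le {ν t : ℝ} (ht : 0 ≤ t) : |cosh (ν * t)| ≤ exp (|ν| * t) := by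
  simpa [abs_mul, abs_of_nonneg ht, abs_of_pos (cosh_pos _)] using cosh_le_exp_abs (ν * t)

lemma abs_sinh_mul_le {ν t : ℝ} (ht : 0 ≤ t) : |sinh (ν * t)| ≤ exp (|ν| * t) := by
  simpa [abs_mul, abs_of_nonneg ht] using abs_sinh_le_exp_abs (ν * t)

lemma integrableOn_besselK_integrand {x : ℝ} (hx : 0 < x) (ν : ℝ) :
    IntegrableOn (fun t => exp (-(x * cosh t)) * cosh (ν * t)) (Ioi 0) :=
  integrableOn_Ioi_of_abs_le_exp_mul_sub_mul_cosh (by fun_prop) hx |ν| fun _ ht =>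
    abs_exp_neg_mul_cosh_mul_le (abs_cosh_mul_le ht.le)

lemma besselK_pos {x : ℝ} (hx : 0 < x) (ν : ℝ) : 0 < besselK ν x := by
  simpa [besselK] using setIntegral_lt_setIntegral_of_forall_lt measurableSet_Ioi (by simp)
    integrableOn_zero (integrableOn_besselK_integrand hx ν) fun t _ => by positivity

lemma besselK_le_besselK_of_abs_le {a b x : ℝ} (hx : 0 < x) (hab : |a| ≤ |b|) :
    besselK a x ≤ besselK b x :=
  setIntegral_mono_on (integrableOn_besselK_integrand hx a) (integrableOn_besselK_integrand hx b)
    measurableSet_Ioi fun t (ht : 0 < t) => by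
      gcongr
      rw [cosh_le_cosh, abs_mul, abs_mul]
      gcongr

lemma besselK_le_exp_sub_mul_besselK {ν s t : ℝ} (hs : 0 < s) (hst : s ≤ t) :
    besselK ν t ≤ exp (s - t) * besselK ν s := by
  rw [besselK, besselK, ← integral_const_mul]
  refine setIntegral_mono_on (integrableOn_besselK_integrand (hs.trans_le hst) ν)
    ((integrableOn_besselK_integrand hs ν).const_mul _) measurableSet_Ioi fun u _ => ?_
  rw [← mul_assoc, ← exp_add]
  gcongr
  nlinarith [one_le_cosh u]

lemma integrableOn_exp_neg_mul_cosh_mul_sinh_mul_sinh {x : ℝ} (hx : 0 < x) (ν : ℝ) :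
    IntegrableOn (fun t => exp (-(x * cosh t)) * (sinh t * sinh (ν * t))) (Ioi 0) :=
  integrableOn_Ioi_of_abs_le_exp_mul_sub_mul_cosh (by fun_prop) hx (1 + |ν|) fun t ht => by
    refine abs_exp_neg_mul_cosh_mul_le ?_
    rw [abs_mul, add_mul, exp_add]
    gcongr
    · simpa using abs_sinh_mul_le (ν := 1) ht.le
    · exact abs_sinh_mul_le ht.le

/-- Integration by parts against `u ↦ exp (-(x * cosh u)) * sinh (ν * u)`, which vanishes at both
ends. -/
lemma mul_integral_exp_neg_mul_cosh_mul_sinh_mul_sinh {x : ℝ} (hx : 0 < x) (ν : ℝ) :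
    x * ∫ t in Ioi 0, exp (-(x * cosh t)) * (sinh t * sinh (ν * t)) = ν * besselK ν x := by
  set φ : ℝ → ℝ := fun u => exp (-(x * cosh u)) * sinh (ν * u)
  set φ' : ℝ → ℝ := fun u => ν * (exp (-(x * cosh u)) * cosh (ν * u))
    - x * (exp (-(x * cosh u)) * (sinh u * sinh (ν * u)))
  have hφ : ∀ u ∈ Ioi (0 : ℝ), HasDerivAt φ (φ' u) u := fun u _ => by
    have := (((hasDerivAt_cosh u).const_mul x).neg.exp).mul
      (((hasDerivAt_id' u).const_mul ν).sinh)
    refine this.congr_deriv ?_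
    simp only [φ', Pi.neg_apply]
    ring
  have hφ'_int : IntegrableOn φ' (Ioi 0) :=
    ((integrableOn_besselK_integrand hx ν).const_mul ν).sub
      ((integrableOn_exp_neg_mul_cosh_mul_sinh_mul_sinh hx ν).const_mul x)
  have hφ_int : IntegrableOn φ (Ioi 0) :=
    integrableOn_Ioi_of_abs_le_exp_mul_sub_mul_cosh (by fun_prop) hx |ν| fun _ ht =>
      abs_exp_neg_mul_cosh_mul_le (abs_sinh_mul_le ht.le)
  have hφ_lim : Tendsto φ atTop (𝓝 0) :=
    tendsto_zero_of_hasDerivAt_of_integrableOn_Ioi hφ hφ'_int hφ_int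
  have key := integral_Ioi_of_hasDerivAt_of_tendsto (by fun_prop) hφ hφ'_int hφ_lim
  rw [integral_sub ((integrableOn_besselK_integrand hx ν).const_mul ν)
    ((integrableOn_exp_neg_mul_cosh_mul_sinh_mul_sinh hx ν).const_mul x), integral_const_mul,
    integral_const_mul] at key
  simp only [φ, mul_zero, sinh_zero, sub_zero] at key
  rw [besselK]
  linarith

lemma hasDerivAt_besselK_eq_neg_integral {x : ℝ} (hx : 0 < x) (ν : ℝ) :
    HasDerivAt (besselK ν)
      (-∫ t in Ioi 0, exp (-(x * cosh t)) * (cosh t * cosh (ν * t))) x := by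
  have := hasDerivAt_integral_of_dominated_loc_of_deriv_le (μ := volume.restrict (Ioi 0))
    (F := fun y t => exp (-(y * cosh t)) * cosh (ν * t))
    (F' := fun y t => -(exp (-(y * cosh t)) * (cosh t * cosh (ν * t))))
    (bound := fun t => exp ((1 + |ν|) * t - x / 2 * cosh t))
    (Ioi_mem_nhds (half_lt_self hx)) (.of_forall fun y => by fun_prop)
    (integrableOn_besselK_integrand hx ν) (by fun_prop) ?_
    (integrableOn_exp_mul_sub_mul_cosh (half_pos hx) _) ?_
  · rw [integral_neg] at this
    exact this.2
  · filter_upwards [ae_restrict_mem measurableSet_Ioi] with t (ht : 0 < t) y (hy : x / 2 < y)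
    rw [norm_neg, norm_eq_abs]
    refine (abs_exp_neg_mul_cosh_mul_le (c := 1 + |ν|) ?_).trans ?_
    · rw [abs_mul, add_mul, exp_add]
      gcongr
      · simpa using abs_cosh_mul_le (ν := 1) ht.le
      · exact abs_cosh_mul_le ht.le
    · gcongr
  · refine .of_forall fun t y _ => ?_
    refine (((hasDerivAt_id' y).mul_const (cosh t)).neg.exp.mul_const (cosh (ν * t))).congr_deriv ?_
    simp only [Pi.neg_apply]
    ring

lemma hasDerivAt_besselK {x : ℝ} (hx : 0 < x) (ν : ℝ) :
    HasDerivAt (besselK ν) (ν / x * besselK ν x - besselK (ν + 1) x) x := by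
  convert hasDerivAt_besselK_eq_neg_integral hx ν using 1
  have hsplit : ∀ t, exp (-(x * cosh t)) * (cosh t * cosh (ν * t))
      = exp (-(x * cosh t)) * cosh ((ν + 1) * t)
        - exp (-(x * cosh t)) * (sinh t * sinh (ν * t)) := fun t => by
    rw [add_mul, one_mul, cosh_add]
    ring
  simp_rw [hsplit]
  rw [integral_sub (integrableOn_besselK_integrand hx _)
    (integrableOn_exp_neg_mul_cosh_mul_sinh_mul_sinh hx ν), ← besselK, div_mul_eq_mul_div,
    ← mul_integral_exp_neg_mul_cosh_mul_sinh_mul_sinh hx ν, mul_div_cancel_left₀ _ hx.ne']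
  ring

lemma continuousOn_besselK (ν : ℝ) : ContinuousOn (besselK ν) (Ioi 0) :=
  fun _ hx => (hasDerivAt_besselK hx ν).continuousAt.continuousWithinAt

lemma continuousOn_besselK_div_rpow (μ ν : ℝ) :
    ContinuousOn (fun t => besselK μ t / t ^ ν) (Ioi 0) :=
  (continuousOn_besselK μ).div (continuousOn_id.rpow_const fun _ ht => .inl (ne_of_gt ht))
    fun _ ht => (rpow_pos_of_pos ht ν).ne'

lemma hasDerivAt_besselK_div_rpow {x : ℝ} (hx : 0 < x) (ν : ℝ) :
    HasDerivAt (fun y => besselK ν y / y ^ ν) (-(besselK (ν + 1) x / x ^ ν)) x := by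
  have hxν := (rpow_pos_of_pos hx ν).ne'
  refine ((hasDerivAt_besselK hx ν).div (hasDerivAt_rpow_const (.inl hx.ne')) hxν).congr_deriv ?_
  rw [rpow_sub_one hx.ne']
  field_simp
  ring

lemma isBigO_exp_mul_besselK_div_rpow {γ : ℝ} (hγ : γ < 1) (μ ν : ℝ) :
    (fun t => exp (γ * t) * (besselK μ t / t ^ ν)) =O[atTop]
      fun t => exp (-((1 - γ) / 2) * t) := by
  have hK : (besselK μ) =O[atTop] fun t => exp (-t) :=
    .of_bound (exp 1 * besselK μ 1) <| (eventually_ge_atTop 1).mono fun t ht => by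
      rw [norm_of_nonneg (besselK_pos (one_pos.trans_le ht) μ).le, norm_of_nonneg (exp_pos _).le]
      calc besselK μ t ≤ exp (1 - t) * besselK μ 1 := besselK_le_exp_sub_mul_besselK one_pos ht
        _ = exp 1 * besselK μ 1 * exp (-t) := by rw [sub_eq_add_neg, exp_add]; ring
  have hpow : (fun t : ℝ => (t ^ ν)⁻¹) =O[atTop] fun t => exp ((1 - γ) / 2 * t) :=
    (isLittleO_rpow_exp_pos_mul_atTop (-ν) (by linarith)).isBigO.congr'
      ((eventually_gt_atTop 0).mono fun t ht => rpow_neg ht.le ν) .rfl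
  refine ((isBigO_refl (fun t => exp (γ * t)) atTop).mul (hK.mul hpow)).congr
    (fun t => by rw [div_eq_mul_inv]) fun t => ?_
  simp only [← exp_add]
  ring_nf

lemma integrableOn_exp_mul_besselK_div_rpow {γ s : ℝ} (hγ : γ < 1) (hs : 0 < s) (μ ν : ℝ) :
    IntegrableOn (fun t => exp (γ * t) * (besselK μ t / t ^ ν)) (Ioi s) :=
  integrable_of_isBigO_exp_neg (by linarith)
    ((continuous_exp.comp (continuous_const.mul continuous_id)).continuousOn.mul
      ((continuousOn_besselK_div_rpow μ ν).mono fun _ ht => hs.trans_le ht))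
    (isBigO_exp_mul_besselK_div_rpow hγ μ ν)

lemma integrableOn_besselK_div_rpow {s : ℝ} (hs : 0 < s) (μ ν : ℝ) :
    IntegrableOn (fun t => besselK μ t / t ^ ν) (Ioi s) := by
  simpa using integrableOn_exp_mul_besselK_div_rpow zero_lt_one hs μ ν

lemma tendsto_besselK_div_rpow_atTop (μ ν : ℝ) :
    Tendsto (fun t => besselK μ t / t ^ ν) atTop (𝓝 0) := by
  have := (isBigO_exp_mul_besselK_div_rpow zero_lt_one μ ν).trans_tendsto
    (tendsto_exp_atBot.comp (tendsto_id.const_mul_atTop_of_neg (by norm_num)))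
  simpa using this

lemma integral_Ioi_besselK_add_one_div_rpow {s : ℝ} (hs : 0 < s) (ν : ℝ) :
    ∫ t in Ioi s, besselK (ν + 1) t / t ^ ν = besselK ν s / s ^ ν := by
  have hderiv : ∀ t ∈ Ici s, HasDerivAt (fun y => -(besselK ν y / y ^ ν))
      (besselK (ν + 1) t / t ^ ν) t := fun t ht => by
    have h := (hasDerivAt_besselK_div_rpow (hs.trans_le ht) ν).neg
    rw [neg_neg] at h
    exact h
  have := integral_Ioi_of_hasDerivAt_of_tendsto
    (hderiv s self_mem_Ici).continuousAt.continuousWithinAt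
    (fun t ht => hderiv t (Ioi_subset_Ici_self ht)) (integrableOn_besselK_div_rpow hs _ ν)
    (tendsto_besselK_div_rpow_atTop ν ν).neg
  simpa using this

lemma integral_Ioi_besselK_div_rpow_lt {μ ν s : ℝ} (hν : μ - 1 < ν) (hμ : 1 / 2 ≤ μ) (hs : 0 < s) :
    ∫ t in Ioi s, besselK μ t / t ^ ν < besselK μ s / s ^ ν := by
  have hpow : ∀ t, 0 < t → ∀ a : ℝ, a / t ^ ν = t ^ (μ - 1 - ν) * (a / t ^ (μ - 1)) :=
    fun t ht a => by
      rw [rpow_sub ht]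
      field_simp [(rpow_pos_of_pos ht (μ - 1)).ne']
  calc ∫ t in Ioi s, besselK μ t / t ^ ν
      < ∫ t in Ioi s, s ^ (μ - 1 - ν) * (besselK μ t / t ^ (μ - 1)) := by
        refine setIntegral_lt_setIntegral_of_forall_lt measurableSet_Ioi (by simp)
          (integrableOn_besselK_div_rpow hs μ ν)
          ((integrableOn_besselK_div_rpow hs μ (μ - 1)).const_mul _) fun t (ht : s < t) => ?_
        have ht0 := hs.trans ht
        rw [hpow t ht0]
        exact mul_lt_mul_of_pos_right (rpow_lt_rpow_of_neg hs ht (by linarith))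
          (div_pos (besselK_pos ht0 μ) (rpow_pos_of_pos ht0 _))
    _ = besselK (μ - 1) s / s ^ ν := by
        have h := integral_Ioi_besselK_add_one_div_rpow hs (μ - 1)
        rw [sub_add_cancel] at h
        rw [integral_const_mul, h, hpow s hs]
    _ ≤ besselK μ s / s ^ ν := by
        gcongr
        exact besselK_le_besselK_of_abs_le hs (abs_le_abs (by linarith) (by linarith))

section TailIntegral

variable {f : ℝ → ℝ} {a : ℝ}

lemma tendsto_setIntegral_Ioi_atTop_zero (hf : IntegrableOn f (Ioi a)) :
    Tendsto (fun r => ∫ t in Ioi r, f t) atTop (𝓝 0) := by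
  have h := (intervalIntegral_tendsto_integral_Ioi a hf tendsto_id).const_sub (∫ t in Ioi a, f t)
  rw [sub_self] at h
  refine h.congr' ((eventually_ge_atTop a).mono fun r hr => ?_)
  dsimp only [id]
  rw [← intervalIntegral.integral_Ioi_sub_Ioi hf hr, sub_sub_cancel]

lemma hasDerivAt_setIntegral_Ioi {s : ℝ} (has : a < s) (hf : IntegrableOn f (Ioi a))
    (hcont : ContinuousAt f s) :
    HasDerivAt (fun r => ∫ t in Ioi r, f t) (-f s) s := by
  have hprim : HasDerivAt (fun r => ∫ t in a..r, f t) (f s) s :=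
    intervalIntegral.integral_hasDerivAt_right
      ((intervalIntegrable_iff_integrableOn_Ioc_of_le has.le).2 (hf.mono_set Ioc_subset_Ioi_self))
      (AEStronglyMeasurable.stronglyMeasurableAtFilter_of_mem hf.aestronglyMeasurable
        (Ioi_mem_nhds has)) hcont
  refine (hprim.const_sub (∫ t in Ioi a, f t)).congr_of_eventuallyEq ?_
  filter_upwards [Ioi_mem_nhds has] with r hr
  rw [← intervalIntegral.integral_Ioi_sub_Ioi hf (le_of_lt hr), sub_sub_cancel]

end TailIntegral

lemma pos_of_strictAntiOn_Ioi_of_tendsto_zero {H : ℝ → ℝ} {a x : ℝ} (hH : StrictAntiOn H (Ioi a))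
    (hlim : Tendsto H atTop (𝓝 0)) (hx : a < x) : 0 < H x := by
  have hx1 : a < x + 1 := by linarith
  have : 0 ≤ H (x + 1) := le_of_tendsto hlim <| (eventually_ge_atTop (x + 1)).mono
    fun s hs => hH.antitoneOn hx1 (hx1.trans_le hs) hs
  exact this.trans_lt (hH hx hx1 (lt_add_one x))

theorem integral_exp_mul_lt_of_integral_Ioi_lt {g : ℝ → ℝ} {a γ x : ℝ} (hγ0 : 0 < γ)
    (hγ1 : γ < 1) (hx : a < x) (hcont : ContinuousOn g (Ioi a)) (hnonneg : ∀ t, a < t → 0 ≤ g t)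
    (hint : ∀ s, a < s → IntegrableOn g (Ioi s))
    (hint_exp : ∀ s, a < s → IntegrableOn (fun t => exp (γ * t) * g t) (Ioi s))
    (htail : ∀ s, a < s → ∫ t in Ioi s, g t < g s) :
    ∫ t in Ioi x, exp (γ * t) * g t < exp (γ * x) / (1 - γ) * ∫ t in Ioi x, g t := by
  set G := fun s => ∫ t in Ioi s, g t
  set F := fun s => ∫ t in Ioi s, exp (γ * t) * g t
  set H := fun s => exp (γ * s) * G s - (1 - γ) * F s
  have hH' : ∀ s, a < s → HasDerivAt H (γ * exp (γ * s) * (G s - g s)) s := fun s hs => by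
    obtain ⟨b, hab, hbs⟩ := exists_between hs
    have hgs : ContinuousAt g s := hcont.continuousAt (Ioi_mem_nhds hs)
    have hG := hasDerivAt_setIntegral_Ioi hbs (hint b hab) hgs
    have hF := hasDerivAt_setIntegral_Ioi hbs (hint_exp b hab) ((continuous_exp.continuousAt.comp
      (continuous_const_mul γ).continuousAt).mul hgs)
    refine ((((hasDerivAt_id' s).const_mul γ).exp.mul hG).sub (hF.const_mul (1 - γ))).congr_deriv ?_
    ring
  have hH_anti : StrictAntiOn H (Ioi a) := by
    refine strictAntiOn_of_hasDerivWithinAt_neg (convex_Ioi a)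
      (fun s hs => (hH' s hs).continuousAt.continuousWithinAt)
      (fun s hs => (hH' s (interior_subset hs)).hasDerivWithinAt) fun s hs => ?_
    rw [interior_Ioi] at hs
    exact mul_neg_of_pos_of_neg (by positivity) (sub_neg.2 (htail s hs))
  have hF_lim : Tendsto F atTop (𝓝 0) := tendsto_setIntegral_Ioi_atTop_zero (hint_exp x hx)
  have hexpG_lim : Tendsto (fun s => exp (γ * s) * G s) atTop (𝓝 0) := by
    refine squeeze_zero' ((eventually_gt_atTop x).mono fun s hs => ?_)
      ((eventually_gt_atTop x).mono fun s hs => ?_) hF_lim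
    · exact mul_nonneg (exp_pos _).le
        (setIntegral_nonneg measurableSet_Ioi fun t ht => hnonneg t (hx.trans (hs.trans ht)))
    · rw [← integral_const_mul]
      refine setIntegral_mono_on ((hint s (hx.trans hs)).const_mul _) (hint_exp s (hx.trans hs))
        measurableSet_Ioi fun t (ht : s < t) => ?_
      gcongr
      exact hnonneg t (hx.trans (hs.trans ht))
  have hH_lim : Tendsto H atTop (𝓝 0) := by
    simpa using hexpG_lim.sub (hF_lim.const_mul (1 - γ))
  have hHx := pos_of_strictAntiOn_Ioi_of_tendsto_zero hH_anti hH_lim hx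
  rw [div_mul_eq_mul_div, lt_div_iff₀ (by linarith)]
  simp only [H, G, F] at hHx
  linarith

theorem stmt_4 (γ ν n : ℝ) (hγ0 : 0 < γ) (hγ1 : γ < 1) (hn : n < 1) (hν : ν ≥ 1 / 2 - n) :
    ∀ x : ℝ, 0 < x →
      (∫ t in Ioi x, Real.exp (γ * t) * besselK (ν + n) t / t ^ ν) <
        (Real.exp (γ * x) / (1 - γ)) * ∫ t in Ioi x, besselK (ν + n) t / t ^ ν := by
  intro x hx
  simp_rw [mul_div_assoc]
  exact integral_exp_mul_lt_of_integral_Ioi_lt hγ0 hγ1 hx (continuousOn_besselK_div_rpow _ ν)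
    (fun t ht => div_nonneg (besselK_pos ht _).le (rpow_nonneg (le_of_lt ht) ν))
    (fun s hs => integrableOn_besselK_div_rpow hs _ ν)
    (fun s hs => integrableOn_exp_mul_besselK_div_rpow hγ1 hs _ ν)
    (fun s hs => integral_Ioi_besselK_div_rpow_lt (by linarith) (by linarith) hs)
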